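/- Fix n and ℓ ≥ 1, and let H, Ĥ ∈ ℝ^{n×n} with ‖H‖_F > 0. For each level k = 1, …, ℓ let B_k be a finite family of subsets of {1,…,n}×{1,…,n} with |B_k| ≤ 2^k, such that all blocks across all levels are pairwise disjoint. Let 0 ≤ ε ≤ 1, u_1, …, u_ℓ ≥ 0 and ξ_1, …, ξ_ℓ > 0. Suppose that: (i) Ĥ agrees with H on every entry not belonging to any block; (ii) for each k and each b ∈ B_k, ‖(Ĥ − H)|_b‖_F ≤ (ε + u_k(1 + ε)) ‖H|_b‖_F; (iii) for each k and each b ∈ B_k, ‖H|_b‖_F ≤ ξ_k ‖H‖_F; and (iv) the storage precisions are chosen adaptively so that u_k ≤ ε / (2^{k/2} ξ_k) for every k = 1, …, ℓ. Then ‖Ĥ − H‖_F ≤ (2√2 · ℓ + 1) ε ‖H‖_F. -/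
import Mathlib


/-- The Frobenius norm of a square real matrix. -/
noncomputable def frobNorm {n : ℕ} (M : Matrix (Fin n) (Fin n) ℝ) : ℝ :=
  Real.sqrt (∑ i, ∑ j, (M i j) ^ 2)

open Classical in
/-- `restrictTo M s` agrees with `M` on entries whose index pair lies in `s`
and is zero elsewhere. -/
noncomputable def restrictTo {n : ℕ} (M : Matrix (Fin n) (Fin n) ℝ)
    (s : Set (Fin n × Fin n)) : Matrix (Fin n) (Fin n) ℝ :=
  fun i j => if (i, j) ∈ s then M i j else 0

lemma frobNorm_nonneg {n : ℕ} (M : Matrix (Fin n) (Fin n) ℝ) : 0 ≤ frobNorm M :=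
  Real.sqrt_nonneg _

lemma sq_frobNorm {n : ℕ} (M : Matrix (Fin n) (Fin n) ℝ) :
    frobNorm M ^ 2 = ∑ i, ∑ j, (M i j) ^ 2 := by
  have : 0 ≤ ∑ i, ∑ j, (M i j) ^ 2 := by positivity
  simpa [frobNorm] using Real.sq_sqrt this

/-- **Adaptive precision selection rule for mixed precision HODLR matrices.**

Under the hypotheses of the global HODLR error bound, with `0 ≤ ε ≤ 1`, `ξ_k > 0`,
and storage precisions chosen adaptively so that `u_k ≤ ε / (2^{k/2} ξ_k)` for every
level `k = 1, …, ℓ`, the total error satisfies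
`‖Ĥ − H‖_F ≤ (2 √2 ℓ + 1) ε ‖H‖_F`. -/
theorem hodlr_adaptive_precision_bound
    {n : ℕ} (ℓ : ℕ) (hℓ : 1 ≤ ℓ)
    (H Hhat : Matrix (Fin n) (Fin n) ℝ) (hH : 0 < frobNorm H)
    (B : ℕ → Finset (Set (Fin n × Fin n)))
    (hcard : ∀ k ∈ Finset.Icc 1 ℓ, (B k).card ≤ 2 ^ k)
    (hdisj : ∀ k ∈ Finset.Icc 1 ℓ, ∀ k' ∈ Finset.Icc 1 ℓ,
      ∀ b ∈ B k, ∀ b' ∈ B k', (k ≠ k' ∨ b ≠ b') → Disjoint b b')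
    (ε : ℝ) (hε0 : 0 ≤ ε) (hε1 : ε ≤ 1) (u ξ : ℕ → ℝ)
    (hu : ∀ k ∈ Finset.Icc 1 ℓ, 0 ≤ u k) (hξ : ∀ k ∈ Finset.Icc 1 ℓ, 0 < ξ k)
    (hoff : ∀ i j, (∀ k ∈ Finset.Icc 1 ℓ, ∀ b ∈ B k, (i, j) ∉ b) →
      Hhat i j = H i j)
    (hblock : ∀ k ∈ Finset.Icc 1 ℓ, ∀ b ∈ B k,
      frobNorm (restrictTo (Hhat - H) b) ≤
        (ε + u k * (1 + ε)) * frobNorm (restrictTo H b))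
    (hxi : ∀ k ∈ Finset.Icc 1 ℓ, ∀ b ∈ B k,
      frobNorm (restrictTo H b) ≤ ξ k * frobNorm H)
    (hadapt : ∀ k ∈ Finset.Icc 1 ℓ,
      u k ≤ ε / ((2 : ℝ) ^ ((k : ℝ) / 2) * ξ k)) :
    frobNorm (Hhat - H) ≤ (2 * Real.sqrt 2 * (ℓ : ℝ) + 1) * ε * frobNorm H := by
  classical
  set E : Matrix (Fin n) (Fin n) ℝ := Hhat - H with hE
  set N := frobNorm H with hN
  set S : Finset (Σ _ : ℕ, Set (Fin n × Fin n)) := (Finset.Icc 1 ℓ).sigma B with hS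
  have hN0 : 0 ≤ N := hH.le
  -- Step A: pointwise covering inequality for E
  have stepA : frobNorm E ^ 2 ≤ ∑ p ∈ S, frobNorm (restrictTo E p.2) ^ 2 := by
    rw [sq_frobNorm]
    have hpt : ∀ i j, E i j ^ 2 ≤ ∑ p ∈ S, (restrictTo E p.2 i j) ^ 2 := by
      intro i j
      by_cases hmem : ∃ p ∈ S, (i, j) ∈ p.2
      · obtain ⟨p₀, hp₀, hij⟩ := hmem
        have h1 : (restrictTo E p₀.2 i j) ^ 2 = E i j ^ 2 := by
          simp [restrictTo, hij]
        calc E i j ^ 2 = (restrictTo E p₀.2 i j) ^ 2 := h1.symm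
          _ ≤ ∑ p ∈ S, (restrictTo E p.2 i j) ^ 2 :=
            Finset.single_le_sum (f := fun p => (restrictTo E p.2 i j) ^ 2)
              (fun p _ => sq_nonneg _) hp₀
      · push_neg at hmem
        have hz : E i j = 0 := by
          have := hoff i j (fun k hk b hb hin => hmem ⟨k, b⟩ (Finset.mem_sigma.2 ⟨hk, hb⟩) hin)
          simp [hE, Matrix.sub_apply, this]
        rw [hz]
        simpa using Finset.sum_nonneg (fun p (_ : p ∈ S) => sq_nonneg (restrictTo E p.2 i j))
    calc ∑ i, ∑ j, E i j ^ 2 ≤ ∑ i, ∑ j, ∑ p ∈ S, (restrictTo E p.2 i j) ^ 2 :=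
          Finset.sum_le_sum fun i _ => Finset.sum_le_sum fun j _ => hpt i j
      _ = ∑ i, ∑ p ∈ S, ∑ j, (restrictTo E p.2 i j) ^ 2 :=
          Finset.sum_congr rfl fun i _ => Finset.sum_comm
      _ = ∑ p ∈ S, ∑ i, ∑ j, (restrictTo E p.2 i j) ^ 2 := Finset.sum_comm
      _ = ∑ p ∈ S, frobNorm (restrictTo E p.2) ^ 2 :=
          Finset.sum_congr rfl fun p _ => (sq_frobNorm _).symm
  -- Step D: disjointness gives sum of restricted H norms ≤ total
  have stepD : ∑ p ∈ S, frobNorm (restrictTo H p.2) ^ 2 ≤ N ^ 2 := by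
    have hpt : ∀ i j, ∑ p ∈ S, (restrictTo H p.2 i j) ^ 2 ≤ H i j ^ 2 := by
      intro i j
      by_cases hmem : ∃ p ∈ S, (i, j) ∈ p.2
      · obtain ⟨p₀, hp₀, hij⟩ := hmem
        have heq : ∑ p ∈ S, (restrictTo H p.2 i j) ^ 2 = (restrictTo H p₀.2 i j) ^ 2 := by
          apply Finset.sum_eq_single_of_mem p₀ hp₀
          intro p hp hne
          have hd : Disjoint p.2 p₀.2 := by
            have hps := Finset.mem_sigma.1 hp
            have hp₀s := Finset.mem_sigma.1 hp₀
            apply hdisj p.1 hps.1 p₀.1 hp₀s.1 p.2 hps.2 p₀.2 hp₀s.2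
            by_contra hcon
            push_neg at hcon
            exact hne (Sigma.ext hcon.1 (heq_of_eq hcon.2))
          have hnot : (i, j) ∉ p.2 := fun h => (Set.disjoint_left.1 hd h) hij
          simp [restrictTo, hnot]
        rw [heq]
        simp [restrictTo, hij]
      · push_neg at hmem
        have hall : ∀ p ∈ S, (restrictTo H p.2 i j) ^ 2 = 0 := by
          intro p hp
          simp [restrictTo, hmem p hp]
        rw [Finset.sum_eq_zero hall]
        positivity
    calc ∑ p ∈ S, frobNorm (restrictTo H p.2) ^ 2
        = ∑ p ∈ S, ∑ i, ∑ j, (restrictTo H p.2 i j) ^ 2 :=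
          Finset.sum_congr rfl fun p _ => sq_frobNorm _
      _ = ∑ i, ∑ p ∈ S, ∑ j, (restrictTo H p.2 i j) ^ 2 := Finset.sum_comm
      _ = ∑ i, ∑ j, ∑ p ∈ S, (restrictTo H p.2 i j) ^ 2 :=
          Finset.sum_congr rfl fun i _ => Finset.sum_comm
      _ ≤ ∑ i, ∑ j, H i j ^ 2 :=
          Finset.sum_le_sum fun i _ => Finset.sum_le_sum fun j _ => hpt i j
      _ = N ^ 2 := (sq_frobNorm H).symm
  -- Step B/C : per-block squared bound
  have stepBC : ∀ p ∈ S, frobNorm (restrictTo E p.2) ^ 2 ≤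
      2 * ε ^ 2 * frobNorm (restrictTo H p.2) ^ 2 + 8 * ε ^ 2 * N ^ 2 / 2 ^ p.1 := by
    intro p hp
    obtain ⟨k, b⟩ := p
    have hps := Finset.mem_sigma.1 hp
    have hk : k ∈ Finset.Icc 1 ℓ := hps.1
    have hb : b ∈ B k := hps.2
    set t : ℝ := (2 : ℝ) ^ ((k : ℝ) / 2) with ht
    have ht0 : 0 < t := Real.rpow_pos_of_pos (by norm_num) _
    have ht2 : t ^ 2 = (2 : ℝ) ^ k := by
      rw [ht, ← Real.rpow_natCast ((2:ℝ) ^ ((k:ℝ)/2)) 2,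
        ← Real.rpow_mul (by norm_num : (0:ℝ) ≤ 2), ← Real.rpow_natCast 2 k]
      norm_num
    have hξk := hξ k hk
    have huk := hu k hk
    have hfnn := frobNorm_nonneg (restrictTo H b)
    have hb1 : frobNorm (restrictTo E b) ≤ ε * frobNorm (restrictTo H b) + 2 * ε * N / t := by
      have h1 := hblock k hk b hb
      have h2 : u k * (1 + ε) * frobNorm (restrictTo H b) ≤
          (ε / (t * ξ k)) * (1 + ε) * (ξ k * N) := by
        apply mul_le_mul
        · exact mul_le_mul_of_nonneg_right (hadapt k hk) (by linarith)
        · exact hxi k hk b hb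
        · exact hfnn
        · positivity
      have h3 : (ε / (t * ξ k)) * (1 + ε) * (ξ k * N) = ε * (1 + ε) * N / t := by
        field_simp
      have h4 : ε * (1 + ε) * N / t ≤ 2 * ε * N / t := by
        apply div_le_div_of_nonneg_right ?_ ht0.le
        nlinarith [mul_nonneg (mul_nonneg hε0 (sub_nonneg.2 hε1)) hN0]
      nlinarith [h1, h2, h3, h4]
    have key : ∀ x y : ℝ, (x + y) ^ 2 ≤ 2 * x ^ 2 + 2 * y ^ 2 := fun x y => by
      nlinarith [sq_nonneg (x - y)]
    have hsq : frobNorm (restrictTo E b) ^ 2 ≤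
        (ε * frobNorm (restrictTo H b) + 2 * ε * N / t) ^ 2 :=
      pow_le_pow_left₀ (frobNorm_nonneg _) hb1 2
    calc frobNorm (restrictTo E b) ^ 2
        ≤ (ε * frobNorm (restrictTo H b) + 2 * ε * N / t) ^ 2 := hsq
      _ ≤ 2 * (ε * frobNorm (restrictTo H b)) ^ 2 + 2 * (2 * ε * N / t) ^ 2 := key _ _
      _ = 2 * ε ^ 2 * frobNorm (restrictTo H b) ^ 2 + 8 * ε ^ 2 * N ^ 2 / t ^ 2 := by
          field_simp
          ring
      _ = 2 * ε ^ 2 * frobNorm (restrictTo H b) ^ 2 + 8 * ε ^ 2 * N ^ 2 / 2 ^ k := by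
          rw [ht2]
  -- sum the constant parts
  have hsum2 : ∑ p ∈ S, 8 * ε ^ 2 * N ^ 2 / 2 ^ p.1 ≤ 8 * (ℓ : ℝ) * ε ^ 2 * N ^ 2 := by
    rw [hS, Finset.sum_sigma]
    have hlev : ∀ k ∈ Finset.Icc 1 ℓ, ∑ _b ∈ B k, 8 * ε ^ 2 * N ^ 2 / 2 ^ k
        ≤ 8 * ε ^ 2 * N ^ 2 := by
      intro k hk
      rw [Finset.sum_const, nsmul_eq_mul]
      have hc : ((B k).card : ℝ) ≤ 2 ^ k := by exact_mod_cast hcard k hk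
      have h2k : (0:ℝ) < 2 ^ k := by positivity
      calc ((B k).card : ℝ) * (8 * ε ^ 2 * N ^ 2 / 2 ^ k)
          ≤ 2 ^ k * (8 * ε ^ 2 * N ^ 2 / 2 ^ k) :=
            mul_le_mul_of_nonneg_right hc (by positivity)
        _ = 8 * ε ^ 2 * N ^ 2 := by field_simp
    calc ∑ k ∈ Finset.Icc 1 ℓ, ∑ _b ∈ B k, 8 * ε ^ 2 * N ^ 2 / 2 ^ k
        ≤ ∑ k ∈ Finset.Icc 1 ℓ, 8 * ε ^ 2 * N ^ 2 := Finset.sum_le_sum hlev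
      _ = (ℓ : ℝ) * (8 * ε ^ 2 * N ^ 2) := by
          rw [Finset.sum_const, nsmul_eq_mul, Nat.card_Icc]
          norm_num
      _ = 8 * (ℓ : ℝ) * ε ^ 2 * N ^ 2 := by ring
  have main : frobNorm E ^ 2 ≤ (8 * (ℓ : ℝ) + 2) * ε ^ 2 * N ^ 2 := by
    calc frobNorm E ^ 2 ≤ ∑ p ∈ S, frobNorm (restrictTo E p.2) ^ 2 := stepA
      _ ≤ ∑ p ∈ S, (2 * ε ^ 2 * frobNorm (restrictTo H p.2) ^ 2
            + 8 * ε ^ 2 * N ^ 2 / 2 ^ p.1) := Finset.sum_le_sum stepBC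
      _ = 2 * ε ^ 2 * (∑ p ∈ S, frobNorm (restrictTo H p.2) ^ 2)
            + ∑ p ∈ S, 8 * ε ^ 2 * N ^ 2 / 2 ^ p.1 := by
          rw [Finset.sum_add_distrib, Finset.mul_sum]
      _ ≤ 2 * ε ^ 2 * N ^ 2 + 8 * (ℓ : ℝ) * ε ^ 2 * N ^ 2 := by
          have := mul_le_mul_of_nonneg_left stepD (by positivity : (0:ℝ) ≤ 2 * ε ^ 2)
          linarith [hsum2]
      _ = (8 * (ℓ : ℝ) + 2) * ε ^ 2 * N ^ 2 := by ring
  have hs2 : Real.sqrt 2 ^ 2 = 2 := Real.sq_sqrt (by norm_num)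
  have hs1 : 1 ≤ Real.sqrt 2 := by nlinarith [Real.sqrt_nonneg 2]
  have hl1 : (1 : ℝ) ≤ (ℓ : ℝ) := by exact_mod_cast hℓ
  have hcoef : (8 * (ℓ : ℝ) + 2) ≤ (2 * Real.sqrt 2 * (ℓ : ℝ) + 1) ^ 2 := by
    nlinarith [sq_nonneg ((ℓ : ℝ) - 1)]
  have hrhs : (8 * (ℓ : ℝ) + 2) * ε ^ 2 * N ^ 2
      ≤ ((2 * Real.sqrt 2 * (ℓ : ℝ) + 1) * ε * N) ^ 2 := by
    calc (8 * (ℓ : ℝ) + 2) * ε ^ 2 * N ^ 2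
        ≤ (2 * Real.sqrt 2 * (ℓ : ℝ) + 1) ^ 2 * ε ^ 2 * N ^ 2 := by
          have := mul_le_mul_of_nonneg_right
            (mul_le_mul_of_nonneg_right hcoef (sq_nonneg ε)) (sq_nonneg N)
          linarith
      _ = ((2 * Real.sqrt 2 * (ℓ : ℝ) + 1) * ε * N) ^ 2 := by ring
  have hfin : frobNorm E ^ 2 ≤ ((2 * Real.sqrt 2 * (ℓ : ℝ) + 1) * ε * N) ^ 2 :=
    main.trans hrhs
  have hR0 : 0 ≤ (2 * Real.sqrt 2 * (ℓ : ℝ) + 1) * ε * N := by positivity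
  have hsqrt := Real.sqrt_le_sqrt hfin
  rwa [Real.sqrt_sq (frobNorm_nonneg E), Real.sqrt_sq hR0] at hsqrt
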